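/- arXiv:2206.06453 — 6 statements merged into one kernel-verified Lean document; each statement's English description precedes it below -/
import Mathlib

section
/- Let R be a semiperfect ring and M a finitely generated left R-module. If M is cyclic, then M is isomorphic to Re/Ie for some idempotent e in R and some left ideal I contained in the Jacobson radical J(R). -/
open Submodule

/-- The radical of a module: intersection of all maximal submodules. -/
def moduleRad (R M : Type*) [Ring R] [AddCommGroup M] [Module R M] : Submodule R M :=
  sInf {N : Submodule R M | IsCoatom N}

/-- The socle of a module: sum of all simple submodules. -/
def moduleSoc (R M : Type*) [Ring R] [AddCommGroup M] [Module R M] : Submodule R M :=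
  sSup {N : Submodule R M | IsAtom N}

/-- A submodule is superfluous (small) if it is redundant in any sup reaching the top. -/
def IsSuperfluous {R M : Type*} [Ring R] [AddCommGroup M] [Module R M]
    (N : Submodule R M) : Prop :=
  ∀ L : Submodule R M, N ⊔ L = ⊤ → L = ⊤

/-- A module is cyclic if generated by one element. -/
def IsCyclicModule (R M : Type*) [Ring R] [AddCommGroup M] [Module R M] : Prop :=
  ∃ m : M, Submodule.span R {m} = ⊤

/-- A module has cyclic top if `M / rad M` is cyclic. -/
def HasCyclicTop (R M : Type*) [Ring R] [AddCommGroup M] [Module R M] : Prop :=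
  IsCyclicModule R (M ⧸ moduleRad R M)

/-- Square-free: no direct sum of two nonzero isomorphic submodules. -/
def IsSquareFreeModule (R M : Type*) [Ring R] [AddCommGroup M] [Module R M] : Prop :=
  ∀ A B : Submodule R M, A ⊓ B = ⊥ → Nonempty (A ≃ₗ[R] B) → A = ⊥

/-- The Jacobson radical of a ring. -/
def jacobsonRadical (R : Type*) [Ring R] : Ideal R := (⊥ : Ideal R).jacobson

/-- A semiperfect ring: `R/J(R)` is semisimple and idempotents lift modulo `J(R)`. -/
def IsSemiperfectRing (R : Type*) [Ring R] : Prop :=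
  IsSemisimpleModule R (R ⧸ jacobsonRadical R) ∧
  ∀ a : R, a * a - a ∈ jacobsonRadical R →
    ∃ e : R, IsIdempotentElem e ∧ e - a ∈ jacobsonRadical R

/-- A local module: a (unique) maximal submodule containing every proper submodule. -/
def IsLocalModule (R M : Type*) [Ring R] [AddCommGroup M] [Module R M] : Prop :=
  ∃ N : Submodule R M, IsCoatom N ∧ ∀ L : Submodule R M, L ≠ ⊤ → L ≤ N

/-- An indecomposable module: nonzero and not the direct sum of two nonzero submodules. -/
def IsIndecomposableModule (R M : Type*) [Ring R] [AddCommGroup M] [Module R M] : Prop :=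
  Nontrivial M ∧ ∀ A B : Submodule R M, A ⊓ B = ⊥ → A ⊔ B = ⊤ → A = ⊥ ∨ B = ⊥

/-- A uniserial module: submodules linearly ordered by inclusion. -/
def IsUniserialModule (R M : Type*) [Ring R] [AddCommGroup M] [Module R M] : Prop :=
  ∀ A B : Submodule R M, A ≤ B ∨ B ≤ A

/-- Left T-nilpotence of a set. -/
def IsLeftTNilpotent {R : Type*} [Ring R] (S : Set R) : Prop :=
  ∀ x : ℕ → R, (∀ n, x n ∈ S) → ∃ n : ℕ, ((List.range (n + 1)).map x).prod = 0

/-- A left perfect ring: `R/J` semisimple and `J` left T-nilpotent. -/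
def IsLeftPerfectRing (R : Type*) [Ring R] : Prop :=
  IsSemisimpleModule R (R ⧸ jacobsonRadical R) ∧
  IsLeftTNilpotent (jacobsonRadical R : Set R)

/-- Composition length of a module, as the Krull dimension of its submodule lattice. -/
noncomputable def modLength (R M : Type*) [Ring R] [AddCommGroup M] [Module R M] :
    WithBot ℕ∞ :=
  Order.krullDim (Submodule R M)

/-- A local idempotent: the corner ring `eRe` is a local ring. -/
def IsLocalIdempotent {R : Type*} [Ring R] (e : R) : Prop :=
  IsIdempotentElem e ∧ e ≠ 0 ∧
  ∀ x : R, x = e * x * e →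
    (∃ y : R, y = e * y * e ∧ x * y = e ∧ y * x = e) ∨
    (∃ y : R, y = e * y * e ∧ (e - x) * y = e ∧ y * (e - x) = e)

/-- A primitive idempotent. -/
def IsPrimitiveIdempotent {R : Type*} [Ring R] (e : R) : Prop :=
  IsIdempotentElem e ∧ e ≠ 0 ∧
  ∀ a b : R, IsIdempotentElem a → IsIdempotentElem b →
    a * b = 0 → b * a = 0 → a + b = e → a = 0 ∨ b = 0

/-- An essential submodule: meets every nonzero submodule nontrivially. -/
def IsEssentialSubmodule {R M : Type*} [Ring R] [AddCommGroup M] [Module R M]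
    (N : Submodule R M) : Prop :=
  ∀ L : Submodule R M, N ⊓ L = ⊥ → L = ⊥

/-!
Write `M ≅ R/K` with `K` a left ideal and let `J = J(R)`. Since `R/J` is semisimple, the image of
`K` there has a complement; its preimage `C` gives `1 = k + c` with `k ∈ K`, `c ∈ C`, and `c` is
idempotent modulo `J`. Lifting `c` to an idempotent `e` yields `K + Re + J = R`, so `K + Re = R`
by Nakayama, and `K ∩ Re ⊆ J`. Hence `M ≅ R/K ≅ Re/(K ∩ Re)`, and `K ∩ Re = (K ∩ Re)e`.
-/

theorem Submodule.exists_sup_eq_top_and_sup_inf_eq {R M : Type*} [Ring R] [AddCommGroup M]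
    [Module R M] (N K : Submodule R M) [IsSemisimpleModule R (M ⧸ N)] :
    ∃ C : Submodule R M, K ⊔ C = ⊤ ∧ (K ⊔ N) ⊓ C = N := by
  obtain ⟨Cq, hCq⟩ := ComplementedLattice.exists_isCompl (map N.mkQ K)
  have hNC : N ≤ Cq.comap N.mkQ := by
    simpa using LinearMap.ker_le_comap N.mkQ (p := Cq)
  refine ⟨Cq.comap N.mkQ, ?_, ?_⟩
  · rw [← sup_eq_right.mpr (hNC.trans le_sup_right), ← map_mkQ_eq_top, map_sup,
      map_comap_eq_of_surjective N.mkQ_surjective, hCq.sup_eq_top]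
  · rw [sup_comm, ← comap_map_mkQ, ← comap_inf, hCq.inf_eq_bot, comap_bot, ker_mkQ]

noncomputable def LinearMap.quotientComapKerEquivOfSupEqTop {R P M : Type*} [Ring R]
    [AddCommGroup P] [Module R P] [AddCommGroup M] [Module R M] (f : P →ₗ[R] M)
    (hf : Function.Surjective f) {S : Submodule R P} (hS : ker f ⊔ S = ⊤) :
    (S ⧸ (ker f).comap S.subtype) ≃ₗ[R] M := by
  refine (quotEquivOfEq _ _ (ker_comp S.subtype f).symm).trans
    ((f ∘ₗ S.subtype).quotKerEquivOfSurjective ?_)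
  intro y
  obtain ⟨r, rfl⟩ := hf y
  obtain ⟨a, ha, b, hb, rfl⟩ := mem_sup.mp (hS ▸ mem_top : r ∈ ker f ⊔ S)
  exact ⟨⟨b, hb⟩, by simp [mem_ker.mp ha]⟩

section

variable {R : Type*} [Ring R]

theorem Ideal.eq_top_of_sup_jacobson_bot_eq_top {L : Ideal R} (h : L ⊔ jacobson ⊥ = ⊤) :
    L = ⊤ :=
  jacobson_eq_top_iff.mp (top_le_iff.mp (h ▸ sup_le le_jacobson (jacobson_mono bot_le)))

theorem mul_self_sub_mem_of_add_eq_one {K C J : Ideal R} (hKC : (K ⊔ J) ⊓ C ≤ J) {k c : R}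
    (hk : k ∈ K) (hc : c ∈ C) (hkc : k + c = 1) : c * c - c ∈ J := by
  have hck : c * k = c - c * c := by rw [eq_sub_of_add_eq hkc]; noncomm_ring
  have hmem : c * k ∈ (K ⊔ J) ⊓ C :=
    ⟨mem_sup_left (K.smul_mem c hk), hck ▸ C.sub_mem hc (C.smul_mem c hc)⟩
  simpa [hck] using J.neg_mem (hKC hmem)

theorem inf_span_singleton_le_of_sub_mem {K C J : Ideal R} (hKC : (K ⊔ J) ⊓ C ≤ J) {c e : R}
    (hc : c ∈ C) (hec : e - c ∈ J) : K ⊓ R ∙ e ≤ J := by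
  rintro _ ⟨hxe, hx⟩
  obtain ⟨x, rfl⟩ := mem_span_singleton.mp hx
  have hxec : x * (e - c) ∈ J := J.smul_mem x hec
  have hxc : x * c ∈ J := hKC
    ⟨by simpa [mul_sub] using sub_mem (mem_sup_left hxe) (mem_sup_right hxec : _ ∈ K ⊔ J),
      C.smul_mem x hc⟩
  simpa [mul_sub] using J.add_mem hxec hxc

theorem IsSemiperfectRing.exists_isIdempotentElem_sup_eq_top_inf_le (hR : IsSemiperfectRing R)
    (K : Ideal R) :
    ∃ e : R, IsIdempotentElem e ∧ K ⊔ R ∙ e = ⊤ ∧ K ⊓ R ∙ e ≤ jacobsonRadical R := by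
  have := hR.1
  obtain ⟨C, hKC, hinf⟩ := exists_sup_eq_top_and_sup_inf_eq (jacobsonRadical R) K
  obtain ⟨k, hk, c, hc, hkc⟩ := mem_sup.mp (hKC ▸ mem_top : (1 : R) ∈ K ⊔ C)
  obtain ⟨e, he, hec⟩ := hR.2 c (mul_self_sub_mem_of_add_eq_one hinf.le hk hc hkc)
  refine ⟨e, he, Ideal.eq_top_of_sup_jacobson_bot_eq_top ?_,
    inf_span_singleton_le_of_sub_mem hinf.le hc hec⟩
  rw [Ideal.eq_top_iff_one, show (1 : R) = k + e - (e - c) by rw [← hkc]; abel]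
  exact sub_mem (add_mem (mem_sup_left (mem_sup_left hk))
    (mem_sup_left (mem_sup_right (mem_span_singleton_self e)))) (mem_sup_right hec)

theorem map_toSpanSingleton_eq_self {e : R} (he : IsIdempotentElem e) {I : Ideal R}
    (hI : I ≤ R ∙ e) : map (LinearMap.toSpanSingleton R R e) I = I := by
  have hfix : ∀ x ∈ I, x * e = x := fun x hx => by
    obtain ⟨a, rfl⟩ := mem_span_singleton.mp (hI hx)
    simp [smul_eq_mul, mul_assoc, he.eq]
  ext x
  refine ⟨?_, fun hx => ⟨x, hx, hfix x hx⟩⟩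
  rintro ⟨y, hy, rfl⟩
  rwa [LinearMap.toSpanSingleton_apply, smul_eq_mul, hfix y hy]

end

theorem stmt2_general {R M : Type*} [Ring R] [AddCommGroup M] [Module R M]
    (hR : IsSemiperfectRing R) (hM : IsCyclicModule R M) :
    ∃ e : R, IsIdempotentElem e ∧ ∃ I : Ideal R, I ≤ jacobsonRadical R ∧
      Nonempty (M ≃ₗ[R]
        (LinearMap.range (LinearMap.toSpanSingleton R R e) ⧸
          Submodule.comap (LinearMap.range (LinearMap.toSpanSingleton R R e)).subtype
            (Submodule.map (LinearMap.toSpanSingleton R R e) I))) := by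
  obtain ⟨m, hm⟩ := hM
  set φ := LinearMap.toSpanSingleton R M m
  have hφ : Function.Surjective φ := by
    rwa [← LinearMap.range_eq_top, ← LinearMap.span_singleton_eq_range]
  obtain ⟨e, he, hsup, hinf⟩ := hR.exists_isIdempotentElem_sup_eq_top_inf_le (LinearMap.ker φ)
  refine ⟨e, he, LinearMap.ker φ ⊓ R ∙ e, hinf, ⟨?_⟩⟩
  rw [map_toSpanSingleton_eq_self he inf_le_right, ← LinearMap.span_singleton_eq_range,
    comap_inf, comap_subtype_self, inf_top_eq]
  exact (φ.quotientComapKerEquivOfSupEqTop hφ hsup).symm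

theorem stmt2 {R M : Type*} [Ring R] [AddCommGroup M] [Module R M]
    (hR : IsSemiperfectRing R) [Module.Finite R M] (hM : IsCyclicModule R M) :
    ∃ e : R, IsIdempotentElem e ∧ ∃ I : Ideal R, I ≤ jacobsonRadical R ∧
      Nonempty (M ≃ₗ[R]
        (LinearMap.range (LinearMap.toSpanSingleton R R e) ⧸
          Submodule.comap (LinearMap.range (LinearMap.toSpanSingleton R R e)).subtype
            (Submodule.map (LinearMap.toSpanSingleton R R e) I))) :=
  stmt2_general hR hM
end

section
/- Let R be a semiperfect ring and M a finitely generated left R-module. Then M is cyclic if and only if M/Rad(M) embeds into R/J(R) as a left R-module. -/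
open Submodule

/-!
Since `R / J(R)` is semisimple, a module embeds into it iff it is a quotient of it. A quotient of
`R / J(R)` is cyclic, and conversely a cyclic module annihilated by `J(R)`, such as `M / Rad M`,
is a quotient of `R / J(R)`. Finally a generator of `M / Rad M` lifts to a generator of `M`,
because `Rad M` is superfluous in the finitely generated module `M`.
-/

open Function

section

variable {R M N : Type*} [Ring R] [AddCommGroup M] [Module R M] [AddCommGroup N] [Module R N]

theorem IsCyclicModule.of_surjective {f : M →ₗ[R] N} (hf : Surjective f)
    (hM : IsCyclicModule R M) : IsCyclicModule R N := by
  obtain ⟨m, hm⟩ := hM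
  refine ⟨f m, ?_⟩
  rw [← Set.image_singleton, ← map_span, hm, Submodule.map_top, LinearMap.range_eq_top.mpr hf]

theorem isCyclicModule_quotient (I : Submodule R R) : IsCyclicModule R (R ⧸ I) :=
  IsCyclicModule.of_surjective I.mkQ_surjective ⟨1, Ideal.span_singleton_one⟩

theorem IsCyclicModule.exists_surjective_quotient {I : Ideal R} (hM : IsCyclicModule R M)
    (hI : I ≤ Module.annihilator R M) : ∃ f : (R ⧸ I) →ₗ[R] M, Surjective f := by
  obtain ⟨m, hm⟩ := hM
  have hker : I ≤ LinearMap.ker (LinearMap.toSpanSingleton R M m) := fun r hr ↦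
    Module.mem_annihilator.mp (hI hr) m
  refine ⟨I.liftQ _ hker, ?_⟩
  rw [← LinearMap.range_eq_top, range_liftQ, ← LinearMap.span_singleton_eq_range, hm]

theorem Ring.jacobson_le_annihilator_quotient_jacobson :
    Ring.jacobson R ≤ Module.annihilator R (M ⧸ Module.jacobson R M) := fun r hr ↦
  Module.mem_annihilator.mpr fun x ↦ by
    obtain ⟨x, rfl⟩ := Submodule.Quotient.mk_surjective _ x
    rw [← Submodule.Quotient.mk_smul, Submodule.Quotient.mk_eq_zero]
    exact Module.le_comap_jacobson (LinearMap.toSpanSingleton R M x) hr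

theorem eq_top_of_jacobson_sup_eq_top [Module.Finite R M] {L : Submodule R M}
    (h : Module.jacobson R M ⊔ L = ⊤) : L = ⊤ := by
  obtain hL | ⟨N, hN, hLN⟩ := eq_top_or_exists_le_coatom L
  · exact hL
  · exact absurd (top_le_iff.mp (h ▸ sup_le (sInf_le hN) hLN)) hN.1

-- `moduleRad R M` is by definition Mathlib's `Module.jacobson R M`.
theorem HasCyclicTop.isCyclicModule [Module.Finite R M] (hM : HasCyclicTop R M) :
    IsCyclicModule R M := by
  obtain ⟨y, hy⟩ := hM
  obtain ⟨x, rfl⟩ := Submodule.Quotient.mk_surjective _ y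
  refine ⟨x, eq_top_of_jacobson_sup_eq_top ?_⟩
  rw [← (Module.jacobson R M).ker_mkQ, sup_comm, ← comap_map_eq, map_span, Set.image_singleton]
  exact (congrArg _ hy).trans (comap_top _)

theorem IsCyclicModule.hasCyclicTop (hM : IsCyclicModule R M) : HasCyclicTop R M :=
  hM.of_surjective (moduleRad R M).mkQ_surjective

theorem IsSemisimpleModule.exists_injective_of_surjective [IsSemisimpleModule R M]
    {f : M →ₗ[R] N} (hf : Surjective f) : ∃ g : N →ₗ[R] M, Injective g := by
  obtain ⟨g, hg⟩ := IsSemisimpleModule.lifting_property f hf LinearMap.id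
  exact ⟨g, LeftInverse.injective (LinearMap.congr_fun hg)⟩

theorem IsSemisimpleModule.exists_surjective_of_injective [IsSemisimpleModule R M]
    {f : N →ₗ[R] M} (hf : Injective f) : ∃ g : M →ₗ[R] N, Surjective g := by
  obtain ⟨g, hg⟩ := IsSemisimpleModule.extension_property f hf LinearMap.id
  exact ⟨g, RightInverse.surjective (LinearMap.congr_fun hg)⟩

end

theorem stmt3 {R M : Type*} [Ring R] [AddCommGroup M] [Module R M]
    (hR : IsSemiperfectRing R) [Module.Finite R M] :
    IsCyclicModule R M ↔
      ∃ f : (M ⧸ moduleRad R M) →ₗ[R] (R ⧸ jacobsonRadical R), Function.Injective f := by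
  have : IsSemisimpleModule R (R ⧸ jacobsonRadical R) := hR.1
  have hJ : jacobsonRadical R = Ring.jacobson R := Ideal.jacobson_bot
  constructor
  · intro hM
    obtain ⟨g, hg⟩ := hM.hasCyclicTop.exists_surjective_quotient
      (hJ ▸ Ring.jacobson_le_annihilator_quotient_jacobson)
    exact IsSemisimpleModule.exists_injective_of_surjective hg
  · rintro ⟨f, hf⟩
    obtain ⟨g, hg⟩ := IsSemisimpleModule.exists_surjective_of_injective hf
    exact HasCyclicTop.isCyclicModule ((isCyclicModule_quotient _).of_surjective hg)
end

section
/- Let R be a semiperfect ring and M a finitely generated left R-module whose top M/Rad(M) is square-free. Then M is cyclic. -/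
open Submodule

/-!
The Jacobson radical of `R` annihilates `M ⧸ Rad M`, so over a semiperfect ring the top of `M` is
a finitely generated semisimple module, a finite sum of simple submodules `S`. Pick `v_S ≠ 0` in
each. A maximal submodule `P` can omit at most one `S`, since two summands outside `P` are both
isomorphic to the quotient by `P`, which square-freeness forbids; hence `∑ v_S` lies in no maximal
submodule and generates the top. Finally `Rad M` is superfluous in the finitely generated `M`, so
any lift of a generator of the top generates `M`.
-/

section

variable {R M : Type*} [Ring R] [AddCommGroup M] [Module R M]

theorem jacobsonRadical_eq_ring_jacobson : jacobsonRadical R = Ring.jacobson R :=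
  Ideal.jacobson_bot

theorem Module.IsTorsionBySet.isSemisimpleModule {I : Ideal R} [I.IsTwoSided]
    [IsSemisimpleModule R (R ⧸ I)] (hM : Module.IsTorsionBySet R M I) :
    IsSemisimpleModule R M := by
  have : IsSemisimpleRing (R ⧸ I) :=
    (LinearMap.isSemisimpleModule_iff_of_bijective
      (l := ({ toFun := id, map_add' := fun _ _ ↦ rfl, map_smul' := fun _ _ ↦ rfl } :
        R ⧸ I →ₛₗ[Ideal.Quotient.mk I] R ⧸ I)) Function.bijective_id).mp ‹_›
  let := hM.module
  exact hM.isSemisimpleModule_iff.mp inferInstance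

theorem isTorsionBySet_quotient_moduleRad :
    Module.IsTorsionBySet R (M ⧸ moduleRad R M) (Ring.jacobson R) :=
  (Module.isTorsionBySet_quotient_iff _ _).mpr fun _ _ hr ↦
    Ring.jacobson_smul_top_le R M (smul_mem_smul hr trivial)

theorem isSemisimpleModule_quotient_moduleRad
    (hR : IsSemisimpleModule R (R ⧸ jacobsonRadical R)) :
    IsSemisimpleModule R (M ⧸ moduleRad R M) := by
  rw [jacobsonRadical_eq_ring_jacobson] at hR
  exact isTorsionBySet_quotient_moduleRad.isSemisimpleModule

theorem isSuperfluous_moduleRad [IsCoatomic (Submodule R M)] :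
    IsSuperfluous (moduleRad R M) := by
  intro N hN
  by_contra hN_top
  obtain ⟨P, hP, hNP⟩ := (eq_top_or_exists_le_coatom N).resolve_left hN_top
  exact hP.1 (top_unique (hN ▸ sup_le (sInf_le hP) hNP))

theorem IsSuperfluous.isCyclicModule_of_quotient {N : Submodule R M} (hN : IsSuperfluous N)
    (h : IsCyclicModule R (M ⧸ N)) : IsCyclicModule R M := by
  obtain ⟨y, hy⟩ := h
  obtain ⟨x, rfl⟩ := N.mkQ_surjective y
  refine ⟨x, hN _ ?_⟩
  rwa [← map_mkQ_eq_top, map_span, Set.image_singleton]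

theorem exists_finset_isAtom_sup_eq_top [IsSemisimpleModule R M] [Module.Finite R M] :
    ∃ t : Finset (Submodule R M), (∀ S ∈ t, IsAtom S) ∧ t.sup id = ⊤ := by
  have htop : IsCompactElement (⊤ : Submodule R M) := by
    rw [← fg_iff_compact, ← Module.finite_def]
    infer_instance
  obtain ⟨t, hts, ht⟩ := (CompleteLattice.isCompactElement_iff_exists_le_sSup_of_le_sSup _ _).mp
    htop _ sSup_atoms_eq_top.ge
  exact ⟨t, fun S hS ↦ hts hS, top_unique ht⟩

theorem IsSquareFreeModule.eq_of_isAtom_of_not_le (h : IsSquareFreeModule R M)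
    {P S T : Submodule R M} (hP : IsCoatom P) (hS : IsAtom S) (hT : IsAtom T)
    (hSP : ¬S ≤ P) (hTP : ¬T ≤ P) : S = T := by
  by_contra hST
  have hPS : IsCompl P S :=
    ⟨(hS.not_le_iff_disjoint.mp hSP).symm, hP.not_le_iff_codisjoint.mp hSP⟩
  have hPT : IsCompl P T :=
    ⟨(hT.not_le_iff_disjoint.mp hTP).symm, hP.not_le_iff_codisjoint.mp hTP⟩
  exact hS.1 <| h S T (disjoint_iff.mp (hS.disjoint_of_ne hT hST))
    ⟨(P.quotientEquivOfIsCompl S hPS).symm.trans (P.quotientEquivOfIsCompl T hPT)⟩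

theorem IsSquareFreeModule.isCyclicModule [IsSemisimpleModule R M] [Module.Finite R M]
    (h : IsSquareFreeModule R M) : IsCyclicModule R M := by
  classical
  obtain ⟨t, ht_atom, ht_top⟩ := exists_finset_isAtom_sup_eq_top (R := R) (M := M)
  choose! v hv_mem hv_ne using fun S hS ↦ (Submodule.ne_bot_iff S).mp (ht_atom S hS).1
  refine ⟨∑ S ∈ t, v S, ?_⟩
  by_contra hne
  obtain ⟨P, hP, hxP⟩ := (eq_top_or_exists_le_coatom _).resolve_left hne
  obtain ⟨T, hT, hTP⟩ : ∃ T ∈ t, ¬T ≤ P := by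
    by_contra! hall
    exact hP.1 (top_unique (ht_top ▸ Finset.sup_le hall))
  have hrest : ∑ S ∈ t.erase T, v S ∈ P := by
    refine P.sum_mem fun S hS ↦ ?_
    obtain ⟨hST, hSt⟩ := Finset.mem_erase.mp hS
    by_contra hvS
    exact hST <| h.eq_of_isAtom_of_not_le hP (ht_atom S hSt) (ht_atom T hT)
      (fun hSP ↦ hvS (hSP (hv_mem S hSt))) hTP
  have hvT : v T ∈ P := by
    have hx : ∑ S ∈ t, v S ∈ P := hxP (mem_span_singleton_self _)
    rw [← Finset.add_sum_erase t v hT] at hx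
    exact (P.add_mem_iff_left hrest).mp hx
  have hPT : Disjoint P T := ((ht_atom T hT).not_le_iff_disjoint.mp hTP).symm
  exact hv_ne T hT (disjoint_def.mp hPT _ hvT (hv_mem T hT))

end

theorem stmt5 {R M : Type*} [Ring R] [AddCommGroup M] [Module R M]
    (hR : IsSemiperfectRing R) [Module.Finite R M]
    (h : IsSquareFreeModule R (M ⧸ moduleRad R M)) :
    IsCyclicModule R M := by
  have := isSemisimpleModule_quotient_moduleRad (M := M) hR.1
  exact isSuperfluous_moduleRad.isCyclicModule_of_quotient h.isCyclicModule
end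

section
/- If R is a left perfect ring and every left R-module is a direct sum of modules with cyclic top, then R is a left Köthe ring, i.e., every left R-module is a direct sum of cyclic modules. -/
open Submodule

universe u

/-!
Over a left perfect ring `R` with Jacobson radical `J`, every nonzero module `M` has a maximal
submodule: `M / JM` is semisimple, being a module over the semisimple ring `R / J`, and `JM ≠ M`
by Nakayama's lemma, which holds for arbitrary modules because `J` is left T-nilpotent. So every
proper submodule lies in a maximal one, and a cyclic submodule `Rm` with `Rm + rad M = M` is all of
`M`. Thus modules with cyclic top are cyclic.
-/

section PerfectRings

variable {R M : Type*} [Ring R] [AddCommGroup M] [Module R M]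

theorem exists_mul_smul_ne_zero_of_smul_top_eq_top {I : Ideal R}
    (h : I • (⊤ : Submodule R M) = ⊤) {r : R} {y : M} (hy : r • y ≠ 0) :
    ∃ a ∈ I, ∃ z : M, (r * a) • z ≠ 0 := by
  have hyI : y ∈ I • (⊤ : Submodule R M) := by rw [h]; exact mem_top
  induction hyI using smul_induction_on' with
  | smul a ha z _ => exact ⟨a, ha, z, by rwa [mul_smul]⟩
  | add y₁ _ y₂ _ ih₁ ih₂ =>
    by_cases h₁ : r • y₁ = 0
    · exact ih₂ (by rwa [smul_add, h₁, zero_add] at hy)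
    · exact ih₁ h₁

theorem IsLeftTNilpotent.subsingleton_of_smul_top_eq_top {I : Ideal R}
    (hI : IsLeftTNilpotent (I : Set R)) (h : I • (⊤ : Submodule R M) = ⊤) :
    Subsingleton M := by
  by_contra hM
  have := not_subsingleton_iff_nontrivial.1 hM
  obtain ⟨x, hx⟩ := exists_ne (0 : M)
  -- Starting from `1 • x ≠ 0`, pick `aₙ ∈ I` one by one keeping all `a₀ ⋯ aₙ ≠ 0`.
  choose a ha z hz using fun p : {p : R × M // p.1 • p.2 ≠ 0} ↦
    exists_mul_smul_ne_zero_of_smul_top_eq_top h p.2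
  let seq : ℕ → {p : R × M // p.1 • p.2 ≠ 0} := fun n ↦
    Nat.rec ⟨(1, x), by simpa using hx⟩ (fun _ p ↦ ⟨(p.1.1 * a p, z p), hz p⟩) n
  have hseq : ∀ n, (seq n).1.1 = ((List.range n).map (a ∘ seq)).prod := by
    intro n
    induction n with
    | zero => rfl
    | succ n ih =>
      rw [List.range_succ, List.map_append, List.prod_append, ← ih]
      simp [seq]
  obtain ⟨n, hn⟩ := hI (a ∘ seq) fun n ↦ ha _
  exact (seq (n + 1)).2 (by rw [hseq (n + 1), hn, zero_smul])

theorem isSemisimpleModule_quotient_smul_top (I : Ideal R) [IsSemisimpleModule R (R ⧸ I)] :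
    IsSemisimpleModule R (M ⧸ I • (⊤ : Submodule R M)) := by
  set P := I • (⊤ : Submodule R M)
  let f : M → (R ⧸ I) →ₗ[R] M ⧸ P := fun m ↦
    I.liftQ (LinearMap.toSpanSingleton R _ (P.mkQ m)) fun a ha ↦ by
      simpa [← Submodule.Quotient.mk_smul] using smul_mem_smul ha mem_top
  refine .of_surjective (Finsupp.lsum ℕ f) fun q ↦ ?_
  obtain ⟨m, rfl⟩ := P.mkQ_surjective q
  exact ⟨Finsupp.single m (Submodule.Quotient.mk 1), by simp [f]⟩

theorem isCoatomic_submodule_of_isLeftPerfectRing (hR : IsLeftPerfectRing R) :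
    IsCoatomic (Submodule R M) := by
  refine ⟨fun N ↦ or_iff_not_imp_left.2 fun hN ↦ ?_⟩
  have : Nontrivial (M ⧸ N) := Submodule.Quotient.nontrivial_iff.2 hN
  set P := jacobsonRadical R • (⊤ : Submodule R (M ⧸ N))
  have hP : P ≠ ⊤ := fun h ↦
    not_subsingleton (M ⧸ N) (hR.2.subsingleton_of_smul_top_eq_top h)
  have := hR.1
  have : Nontrivial ((M ⧸ N) ⧸ P) := Submodule.Quotient.nontrivial_iff.2 hP
  have := isSemisimpleModule_quotient_smul_top (M := M ⧸ N) (jacobsonRadical R)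
  obtain ⟨C, hC⟩ := IsCoatomic.exists_coatom (α := Submodule R ((M ⧸ N) ⧸ P))
  let f := P.mkQ ∘ₗ N.mkQ
  have hf : Function.Surjective f := P.mkQ_surjective.comp N.mkQ_surjective
  refine ⟨C.comap f, (isCoatom_comap_iff hf).2 hC, fun n hn ↦ ?_⟩
  simp [f, (Submodule.Quotient.mk_eq_zero N).2 hn]

theorem IsCyclicModule.of_hasCyclicTop [IsCoatomic (Submodule R M)] (h : HasCyclicTop R M) :
    IsCyclicModule R M := by
  obtain ⟨mb, hmb⟩ := h
  obtain ⟨m, rfl⟩ := (moduleRad R M).mkQ_surjective mb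
  refine ⟨m, ?_⟩
  have hsup : moduleRad R M ⊔ span R {m} = ⊤ := by
    rw [← comap_map_mkQ, map_span, Set.image_singleton, hmb, comap_top]
  obtain h | ⟨K, hK, hmK⟩ := eq_top_or_exists_le_coatom (span R {m})
  · exact h
  · exact absurd (top_le_iff.1 (hsup ▸ sup_le (sInf_le hK) hmK)) hK.1

end PerfectRings

theorem stmt7 {R : Type u} [Ring R] (hperf : IsLeftPerfectRing R)
    (h : ∀ (M : Type u) [AddCommGroup M] [Module R M],
      ∃ (ι : Type u) (N : ι → Submodule R M), iSupIndep N ∧ iSup N = ⊤ ∧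
        ∀ i, HasCyclicTop R (N i)) :
    ∀ (M : Type u) [AddCommGroup M] [Module R M],
      ∃ (ι : Type u) (N : ι → Submodule R M), iSupIndep N ∧ iSup N = ⊤ ∧
        ∀ i, IsCyclicModule R (N i) := by
  intro M _ _
  obtain ⟨ι, N, hind, hsup, hct⟩ := h M
  refine ⟨ι, N, hind, hsup, fun i ↦ ?_⟩
  have := isCoatomic_submodule_of_isLeftPerfectRing (M := N i) hperf
  exact .of_hasCyclicTop (hct i)
end

section
/- Let R be a left quasi-duo ring with only finitely many isomorphism classes of simple left R-modules. If P₁ and P₂ are distinct maximal left ideals of R, then R/P₁ and R/P₂ are non-isomorphic as left R-modules, and R/J(R) is a finite direct product of division rings. -/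
open Submodule

universe u

/-!
Every maximal left ideal `P` is two-sided, hence equals the annihilator of `R ⧸ P`; so
isomorphic simple quotients come from equal maximal left ideals, and there are only finitely
many maximal left ideals `P₁, …, Pₘ`. They are pairwise comaximal two-sided ideals whose
quotients are division rings, and the Chinese remainder theorem maps `R` onto `∏ R ⧸ Pᵢ`
with kernel `⋂ Pᵢ = J(R)`.
-/

namespace Ideal

variable {R : Type*} [Ring R]

theorem eq_of_linearEquiv_quotient {I J : Ideal R} [I.IsTwoSided] [J.IsTwoSided]
    (e : (R ⧸ I) ≃ₗ[R] (R ⧸ J)) : I = J := by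
  rw [← I.annihilator_quotient, e.annihilator_eq, J.annihilator_quotient]

theorem pi_quotient_mk_surjective {ι : Type*} [Finite ι] {I : ι → Ideal R}
    [∀ i, (I i).IsTwoSided] (hI : Pairwise fun i j ↦ I i ⊔ I j = ⊤) :
    Function.Surjective (RingHom.pi fun i ↦ Quotient.mk (I i)) := by
  classical
  cases nonempty_fintype ι
  intro y
  choose x hx using fun i ↦ Quotient.mk_surjective (y i)
  have exists_indicator : ∀ i, ∃ e : R, Quotient.mk (I i) e = 1 ∧ ∀ j ≠ i, e ∈ I j := by
    intro i
    have hsup : I i ⊔ ⨅ j ∈ (Finset.univ.erase i), I j = ⊤ :=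
      sup_iInf_eq_top fun j hj ↦ hI (Finset.ne_of_mem_erase hj).symm
    obtain ⟨a, ha, e, he, hae⟩ := Submodule.mem_sup.1 ((eq_top_iff_one _).1 hsup)
    refine ⟨e, ?_, by simpa using he⟩
    rw [eq_sub_of_add_eq' hae, map_sub, map_one, Quotient.eq_zero_iff_mem.2 ha, sub_zero]
  choose e he₁ he₂ using exists_indicator
  refine ⟨∑ i, x i * e i, funext fun i ↦ ?_⟩
  rw [RingHom.pi_apply, map_sum, Fintype.sum_eq_single i fun j hj ↦ by
    rw [map_mul, Quotient.eq_zero_iff_mem.2 (he₂ j i hj.symm), mul_zero]]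
  rw [map_mul, he₁, mul_one, hx]

end Ideal

def IsLeftQuasiDuo (R : Type*) [Ring R] : Prop :=
  ∀ P : Ideal R, IsCoatom P → ∀ r x : R, x ∈ P → x * r ∈ P

namespace IsLeftQuasiDuo

variable {R : Type u} [Ring R]

theorem isTwoSided (hR : IsLeftQuasiDuo R) {P : Ideal R} (hP : IsCoatom P) : P.IsTwoSided :=
  ⟨fun r hx ↦ hR P hP r _ hx⟩

theorem eq_of_linearEquiv_quotient (hR : IsLeftQuasiDuo R) {P₁ P₂ : Ideal R}
    (h₁ : IsCoatom P₁) (h₂ : IsCoatom P₂) (e : (R ⧸ P₁) ≃ₗ[R] (R ⧸ P₂)) : P₁ = P₂ :=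
  have := hR.isTwoSided h₁
  have := hR.isTwoSided h₂
  Ideal.eq_of_linearEquiv_quotient e

theorem finite_setOf_isCoatom (hR : IsLeftQuasiDuo R) {ι : Type*} [Finite ι]
    (f : ι → Ideal R) (hf : ∀ i, IsCoatom (f i))
    (hfin : ∀ P : Ideal R, IsCoatom P → ∃ i, Nonempty ((R ⧸ P) ≃ₗ[R] (R ⧸ f i))) :
    {P : Ideal R | IsCoatom P}.Finite := by
  refine (Set.finite_range f).subset fun P hP ↦ ?_
  obtain ⟨i, ⟨e⟩⟩ := hfin P hP
  exact ⟨i, (hR.eq_of_linearEquiv_quotient hP (hf i) e).symm⟩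

theorem exists_surjective_pi_divisionRing (hR : IsLeftQuasiDuo R)
    (hfinite : {P : Ideal R | IsCoatom P}.Finite) :
    ∃ (m : ℕ) (D : Fin m → Type u) (inst : ∀ i, DivisionRing (D i)),
      letI := inst
      ∃ g : R →+* ((i : Fin m) → D i), Function.Surjective g ∧
        RingHom.ker g = jacobsonRadical R := by
  obtain ⟨m, P, hP_inj, hP_range⟩ := hfinite.fin_param
  have hP : ∀ i, IsCoatom (P i) := fun i ↦ hP_range.le ⟨i, rfl⟩
  have := fun i ↦ hR.isTwoSided (hP i)
  have := fun i ↦ Ideal.isMaximal_def.2 (hP i)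
  refine ⟨m, fun i ↦ R ⧸ P i, fun i ↦ Ideal.Quotient.divisionRing (P i),
    RingHom.pi fun i ↦ Ideal.Quotient.mk (P i),
    Ideal.pi_quotient_mk_surjective fun i j hij ↦
      (hP i).sup_eq_top_of_ne (hP j) (hP_inj.ne hij), ?_⟩
  rw [Ideal.ker_Pi_Quotient_mk, jacobsonRadical, Ideal.jacobson, ← sInf_range]
  congr 1
  ext J
  simp [hP_range, Ideal.isMaximal_def]

end IsLeftQuasiDuo

theorem stmt11 {R : Type u} [Ring R]
    (hqd : ∀ P : Ideal R, IsCoatom P → ∀ r x : R, x ∈ P → x * r ∈ P)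
    (n : ℕ) (f : Fin n → Ideal R) (hf : ∀ i, IsCoatom (f i))
    (hfin : ∀ P : Ideal R, IsCoatom P → ∃ i, Nonempty ((R ⧸ P) ≃ₗ[R] (R ⧸ f i))) :
    (∀ P₁ P₂ : Ideal R, IsCoatom P₁ → IsCoatom P₂ → P₁ ≠ P₂ →
        IsEmpty ((R ⧸ P₁) ≃ₗ[R] (R ⧸ P₂))) ∧
    ∃ (m : ℕ) (D : Fin m → Type u) (inst : ∀ i, DivisionRing (D i)),
      letI := inst
      ∃ g : R →+* ((i : Fin m) → D i), Function.Surjective g ∧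
        RingHom.ker g = jacobsonRadical R :=
  ⟨fun _ _ h₁ h₂ hne ↦ ⟨fun e ↦ hne (IsLeftQuasiDuo.eq_of_linearEquiv_quotient hqd h₁ h₂ e)⟩,
    IsLeftQuasiDuo.exists_surjective_pi_divisionRing hqd
      (IsLeftQuasiDuo.finite_setOf_isCoatom hqd f hf hfin)⟩
end

section
/- Let R be a left Artinian ring. Then R is a finite direct product of local rings if and only if R is Abelian (every idempotent of R is central). -/
open Submodule

universe u

/-!
An idempotent of a product of local rings has every coordinate equal to `0` or `1`, so it is
central. Conversely, in an Artinian ring `1` is a finite sum of orthogonal primitive idempotents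
(peel off an idempotent `p` with `R p` minimal, and recurse on the complement). When these are
central, `R` is the product of the corners `eᵢ R eᵢ`; each corner is Artinian and its only
idempotents are `0` and `1`. Such a ring is local: idempotents lift modulo the nilpotent Jacobson
radical `J`, so the semisimple ring `R / J` has no nontrivial idempotents and is therefore a
division ring, and units lift along `R → R / J`, which forces every nonunit into `J`.
-/

section

variable {R : Type*} [Ring R]

theorem IsLocalRing.eq_zero_or_eq_one_of_isIdempotentElem [IsLocalRing R] {e : R}
    (he : IsIdempotentElem e) : e = 0 ∨ e = 1 := by
  rcases IsLocalRing.isUnit_or_isUnit_of_add_one (add_sub_cancel e 1) with hu | hu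
  · exact .inr (sub_eq_zero.mp (hu.mul_right_eq_zero.mp he.mul_one_sub_self)).symm
  · exact .inl (hu.mul_right_eq_zero.mp he.one_sub_mul_self)

theorem Pi.mul_comm_of_isIdempotentElem {ι : Type*} {S : ι → Type*} [∀ i, Ring (S i)]
    [∀ i, IsLocalRing (S i)] {e : Π i, S i} (he : IsIdempotentElem e) (r : Π i, S i) :
    e * r = r * e := by
  funext i
  rcases IsLocalRing.eq_zero_or_eq_one_of_isIdempotentElem (congrFun he i) with h | h <;>
    simp [h]

theorem Ideal.isNilpotent_of_mem_of_isNilpotent {I : Ideal R} (hI : IsNilpotent I) {x : R}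
    (hx : x ∈ I) : IsNilpotent x := by
  obtain ⟨n, hn⟩ := hI
  have := Ideal.pow_mem_pow hx n
  rw [hn, Ideal.zero_eq_bot, Ideal.mem_bot] at this
  exact ⟨n, this⟩

theorem RingHom.isUnit_of_isUnit_map_of_ker_isNilpotent {S : Type*} [Ring S] (f : R →+* S)
    (hf : Function.Surjective f) (h : ∀ x ∈ RingHom.ker f, IsNilpotent x) {x : R}
    (hx : IsUnit (f x)) : IsUnit x := by
  obtain ⟨y, hy⟩ := hf ↑hx.unit⁻¹
  have key : ∀ a b : R, f a * f b = 1 → IsUnit (a * b) := fun a b hab => by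
    simpa using (h (1 - a * b) (by simp [hab])).isUnit_one_sub
  have hxy := key x y (by rw [hy, IsUnit.mul_val_inv])
  have hyx := key y x (by rw [hy, IsUnit.val_inv_mul])
  exact isUnit_iff_exists_and_exists.mpr
    ⟨⟨y * ↑hxy.unit⁻¹, by rw [← mul_assoc, hxy.mul_val_inv]⟩,
      ⟨↑hyx.unit⁻¹ * y, by rw [mul_assoc, hyx.val_inv_mul]⟩⟩

theorem IsSemisimpleRing.isUnit_of_ne_zero [IsSemisimpleRing R]
    (h : ∀ e : R, IsIdempotentElem e → e = 0 ∨ e = 1) {x : R} (hx : x ≠ 0) : IsUnit x := by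
  obtain ⟨e, he, hspan⟩ := IsSemisimpleRing.ideal_eq_span_idempotent (Ideal.span {x})
  rcases h e he with rfl | rfl
  · exact absurd (Ideal.span_singleton_eq_bot.mp (hspan.trans (by simp))) hx
  · obtain ⟨y, hy⟩ := Ideal.mem_span_singleton'.mp (hspan ▸ Ideal.mem_span_singleton_self 1)
    exact .of_mul_eq_one_right y hy

theorem IsArtinianRing.isLocalRing_of_isIdempotentElem [IsArtinianRing R] [Nontrivial R]
    (h : ∀ e : R, IsIdempotentElem e → e = 0 ∨ e = 1) : IsLocalRing R := by
  set J := Ring.jacobson R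
  have hsurj : Function.Surjective (Ideal.Quotient.mk J) := Ideal.Quotient.mk_surjective
  have hnil : ∀ x ∈ RingHom.ker (Ideal.Quotient.mk J), IsNilpotent x := fun x hx =>
    Ideal.isNilpotent_of_mem_of_isNilpotent IsSemiprimaryRing.isNilpotent
      (by rwa [Ideal.mk_ker] at hx)
  have : Nontrivial (R ⧸ J) := Ideal.Quotient.nontrivial_iff.mpr (Ring.jacobson_lt_top R).ne
  have hidem : ∀ e : R ⧸ J, IsIdempotentElem e → e = 0 ∨ e = 1 := fun e he => by
    obtain ⟨e', he', rfl⟩ := exists_isIdempotentElem_eq_of_ker_isNilpotent _ hnil e (hsurj e) he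
    rcases h e' he' with rfl | rfl <;> simp
  have hunit : ∀ x : R, x ∉ J → IsUnit x := fun x hx =>
    (Ideal.Quotient.mk J).isUnit_of_isUnit_map_of_ker_isNilpotent hsurj hnil <|
      IsSemisimpleRing.isUnit_of_ne_zero hidem (by rwa [Ne, Ideal.Quotient.eq_zero_iff_mem])
  refine .of_nonunits_add fun a b ha hb => ?_
  have hJ : a + b ∈ J :=
    J.add_mem (not_not.mp (mt (hunit a) ha)) (not_not.mp (mt (hunit b) hb))
  exact fun hab => (Ring.jacobson_lt_top R).ne (J.eq_top_of_isUnit_mem hJ hab)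

theorem Ideal.span_singleton_lt_span_singleton_add {a b : R} (ha : IsIdempotentElem a)
    (hab : a * b = 0) (hba : b * a = 0) (hb : b ≠ 0) :
    Ideal.span {a} < Ideal.span {a + b} := by
  have hmul : (a + b) * a = a := by rw [add_mul, ha.eq, hba, add_zero]
  refine lt_of_le_not_ge ?_ fun hle => hb ?_
  · rw [Ideal.span_singleton_le_iff_mem, Ideal.mem_span_singleton']
    exact ⟨a, by rw [mul_add, ha.eq, hab, add_zero]⟩
  · obtain ⟨r, hr⟩ :=
      Ideal.mem_span_singleton'.mp ((Ideal.span_singleton_le_iff_mem _).mp hle)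
    have : (a + b) * a = a + b := by rw [← hr, mul_assoc, ha.eq]
    simpa using this.symm.trans hmul

theorem IsIdempotentElem.exists_isPrimitiveIdempotent_below [IsArtinianRing R] {f : R}
    (hf : IsIdempotentElem f) (hf0 : f ≠ 0) :
    ∃ p : R, IsPrimitiveIdempotent p ∧ p * f = p ∧ f * p = p := by
  obtain ⟨_, ⟨p, ⟨hp, hp0, hpf, hfp⟩, rfl⟩, hmin⟩ := IsArtinian.set_has_minimal
    ((fun p => Ideal.span {p}) ''
      {p : R | IsIdempotentElem p ∧ p ≠ 0 ∧ p * f = p ∧ f * p = p})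
    ⟨_, f, ⟨hf, hf0, hf.eq, hf.eq⟩, rfl⟩
  refine ⟨p, ⟨hp, hp0, fun a b ha _ hab hba hsum => ?_⟩, hpf, hfp⟩
  subst hsum
  by_contra! h
  have hap : a * (a + b) = a := by rw [mul_add, ha.eq, hab, add_zero]
  have hpa : (a + b) * a = a := by rw [add_mul, ha.eq, hba, add_zero]
  refine hmin _ ⟨a, ⟨ha, h.1, ?_, ?_⟩, rfl⟩
    (Ideal.span_singleton_lt_span_singleton_add ha hab hba h.2)
  · rw [← hap, mul_assoc, hpf]
  · rw [← hpa, ← mul_assoc, hfp]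

theorem IsIdempotentElem.exists_orthogonalIdempotents_isPrimitiveIdempotent_sum_eq
    [IsArtinianRing R] {f : R} (hf : IsIdempotentElem f) :
    ∃ (n : ℕ) (e : Fin n → R), OrthogonalIdempotents e ∧
      (∀ i, IsPrimitiveIdempotent (e i)) ∧ ∑ i, e i = f := by
  induction f using (wellFounded_lt.onFun (f := fun f : R => Ideal.span {f})).induction with
  | h f ih =>
  by_cases hf0 : f = 0
  · exact ⟨0, Fin.elim0, ⟨(·.elim0), fun i ↦ i.elim0⟩, (·.elim0), by simp [hf0]⟩
  obtain ⟨p, hp, hpf, hfp⟩ := hf.exists_isPrimitiveIdempotent_below hf0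
  have hpg : p * (f - p) = 0 := by rw [mul_sub, hpf, hp.1.eq, sub_self]
  have hgp : (f - p) * p = 0 := by rw [sub_mul, hfp, hp.1.eq, sub_self]
  have hg : IsIdempotentElem (f - p) := hp.1.sub hf hpf hfp
  have hlt : Ideal.span {f - p} < Ideal.span {f} := by
    simpa using Ideal.span_singleton_lt_span_singleton_add hg hgp hpg hp.2.1
  obtain ⟨n, e, he, hprim, hsum⟩ := ih _ hlt hg
  have hcons : (Fin.cons p e : Fin (n + 1) → R) = (Option.elim · p e) ∘ finSuccEquiv n := by
    ext i; cases i using Fin.cases <;> simp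
  refine ⟨n + 1, Fin.cons p e, ?_, Fin.cases hp hprim, by simp [Fin.sum_univ_succ, hsum]⟩
  rw [hcons, OrthogonalIdempotents.equiv]
  exact he.option p hp.1 (by rwa [hsum]) (by rwa [hsum])

namespace IsPrimitiveIdempotent

variable {e : R} (he : IsPrimitiveIdempotent e)
include he

theorem eq_zero_or_eq_one_of_isIdempotentElem_corner {x : he.1.Corner}
    (hx : IsIdempotentElem x) : x = 0 ∨ x = 1 := by
  obtain ⟨hex, hxe⟩ := (Subsemigroup.mem_corner_iff he.1).mp x.2
  have hx' : IsIdempotentElem x.1 := congrArg Subtype.val hx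
  rcases he.2.2 x.1 (e - x.1) hx' (hx'.sub he.1 hxe hex)
    (by rw [mul_sub, hxe, hx'.eq, sub_self]) (by rw [sub_mul, hex, hx'.eq, sub_self])
    (add_sub_cancel _ _) with h | h
  · exact .inl (Subtype.ext h)
  · exact .inr (Subtype.ext (sub_eq_zero.mp h).symm)

theorem isLocalRing_corner [IsArtinianRing he.1.Corner] : IsLocalRing he.1.Corner :=
  have : Nontrivial he.1.Corner := ⟨0, 1, fun h => he.2.1 (congrArg Subtype.val h).symm⟩
  IsArtinianRing.isLocalRing_of_isIdempotentElem fun _ =>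
    he.eq_zero_or_eq_one_of_isIdempotentElem_corner

end IsPrimitiveIdempotent

end

theorem stmt13 {R : Type u} [Ring R] [IsArtinianRing R] :
    (∃ (n : ℕ) (S : Fin n → Type u) (inst : ∀ i, Ring (S i)),
      letI := inst
      (∀ i, IsLocalRing (S i)) ∧ Nonempty (R ≃+* ((i : Fin n) → S i)))
    ↔ ∀ e : R, IsIdempotentElem e → ∀ r : R, e * r = r * e := by
  constructor
  · rintro ⟨n, S, inst, hloc, ⟨φ⟩⟩ e he r
    refine φ.injective ?_
    rw [map_mul, map_mul]
    exact Pi.mul_comm_of_isIdempotentElem (he.map φ) (φ r)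
  · intro hab
    obtain ⟨n, e, horth, hprim, hsum⟩ :=
      IsIdempotentElem.one.exists_orthogonalIdempotents_isPrimitiveIdempotent_sum_eq (R := R)
    have he : CompleteOrthogonalIdempotents e := ⟨horth, hsum⟩
    let φ := he.ringEquivOfIsMulCentral fun i =>
      Semigroup.mem_center_iff.mpr fun r => (hab _ (he.idem i) r).symm
    refine ⟨n, fun i => (he.idem i).Corner, fun i => inferInstance, fun i => ?_, ⟨φ⟩⟩
    have : IsArtinianRing (he.idem i).Corner :=
      (show Function.Surjective ((Pi.evalRingHom _ i).comp φ.toRingHom) from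
        (Function.surjective_eval i).comp φ.surjective).isArtinianRing
    exact (hprim i).isLocalRing_corner
end
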